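/- arXiv:2009.13241 — 6 statements merged into one kernel-verified Lean document; each statement's English description precedes it below -/
import Mathlib

section
/- For a Markov operator cocycle (P,σ), if P_ω^{(n)} f → 0 in L^1 as n → ∞ for every f ∈ L^1_0(X,m) and ℙ-a.e. ω (exactness), then for every f ∈ D(X,m) and any invariant density map h (i.e., P_ω h_ω = h_{σω} ℙ-a.s.), one has ‖P_ω^{(n)} f − h_{σ^n ω}‖_{L^1} → 0 as n → ∞, for ℙ-a.e. ω. -/
open MeasureTheory Filter Topology

/-- The cocycle `P_ω^{(n)} = P_{σ^{n-1}ω} ∘ ⋯ ∘ P_ω` generated by a family of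
operators over the driving system `σ`. -/
noncomputable def coc {Ω M : Type*} [Monoid M] (P : Ω → M) (σ : Ω → Ω) : ℕ → Ω → M
  | 0, _ => 1
  | n + 1, ω => P (σ^[n] ω) * coc P σ n ω

/-- If a Markov operator cocycle `(P,σ)` is exact (`‖P_ω^{(n)} f‖₁ → 0` for all
mean-zero `f`, a.e. `ω`), then for every density `f` and every invariant density
map `h`, `‖P_ω^{(n)} f − h_{σⁿω}‖₁ → 0` for a.e. `ω`. -/
theorem exact_implies_convergence_to_invariant_density
    {X : Type*} [MeasurableSpace X] (m : Measure X) [IsProbabilityMeasure m]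
    {Ω : Type*} [MeasurableSpace Ω] (Pr : Measure Ω) [IsProbabilityMeasure Pr]
    (σ : Ω → Ω) (hσ : MeasurePreserving σ Pr Pr)
    (P : Ω → Module.End ℝ (Lp ℝ 1 m))
    (hP : ∀ᵐ ω ∂Pr, (∀ f : Lp ℝ 1 m, 0 ≤ f → 0 ≤ P ω f) ∧
      ∀ f : Lp ℝ 1 m, ∫ x, (P ω f) x ∂m = ∫ x, f x ∂m)
    (hexact : ∀ᵐ ω ∂Pr, ∀ f : Lp ℝ 1 m, ∫ x, f x ∂m = 0 →
      Tendsto (fun n => ‖coc P σ n ω f‖) atTop (𝓝 0))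
    (h : Ω → Lp ℝ 1 m) (hmeas : StronglyMeasurable h)
    (hdens : ∀ᵐ ω ∂Pr, 0 ≤ h ω ∧ ∫ x, (h ω) x ∂m = 1)
    (hinv : ∀ᵐ ω ∂Pr, P ω (h ω) = h (σ ω)) :
    ∀ f : Lp ℝ 1 m, 0 ≤ f → ∫ x, f x ∂m = 1 →
      ∀ᵐ ω ∂Pr, Tendsto (fun n => ‖coc P σ n ω f - h (σ^[n] ω)‖) atTop (𝓝 0) := by
  intro f _ hf1
  -- invariance along the whole orbit, a.e.
  have horbit : ∀ᵐ ω ∂Pr, ∀ k : ℕ, P (σ^[k] ω) (h (σ^[k] ω)) = h (σ (σ^[k] ω)) := by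
    rw [MeasureTheory.ae_all_iff]
    intro k
    exact (hσ.iterate k).quasiMeasurePreserving.ae hinv
  filter_upwards [hexact, hdens, horbit] with ω hex hd horb
  -- the cocycle carries h ω to h (σ^[n] ω)
  have hcoc : ∀ n : ℕ, coc P σ n ω (h ω) = h (σ^[n] ω) := by
    intro n
    induction n with
    | zero => simp [coc]
    | succ n ih =>
        have : coc P σ (n + 1) ω = P (σ^[n] ω) * coc P σ n ω := rfl
        rw [this]
        rw [Module.End.mul_apply, ih]
        rw [horb n, Function.iterate_succ_apply']
  have hzero : ∫ x, (f - h ω) x ∂m = 0 := by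
    have : ∫ x, (f - h ω) x ∂m = ∫ x, f x ∂m - ∫ x, (h ω) x ∂m := by
      rw [← integral_sub (L1.integrable_coeFn f) (L1.integrable_coeFn (h ω))]
      refine integral_congr_ae ?_
      filter_upwards [Lp.coeFn_sub f (h ω)] with x hx
      rw [hx]; simp
    rw [this, hf1, hd.2]; ring
  have := hex (f - h ω) hzero
  refine this.congr fun n => ?_
  congr 1
  rw [map_sub, hcoc n]
end

section
/- Suppose Ω is a compact topological space and (P,σ) is a Markov operator cocycle that is prior mixing for homogeneous observables: there is a ℙ-full set Ω₀ such that for all ω ∈ Ω₀, f ∈ L^1_0(X,m), g ∈ L^∞(X,m), ∫ P_ω^{(n)} f · g dm → 0. Then (P,σ) is prior mixing for inhomogeneous observables in C(Ω, L^∞(X,m)): for all ω ∈ Ω₀, f ∈ L^1_0(X,m) and every bounded continuous map g: Ω → L^∞(X,m), one has ∫_X P_ω^{(n)} f · g_{σ^n ω} dm → 0 as n → ∞. -/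
/-!
The pairings `Λₙ h = ∫ P_ω^{(n)} f · h dm` are continuous linear functionals on the Banach space
`L^∞(X,m)` which tend to zero pointwise by homogeneous prior mixing. By the Banach–Steinhaus
theorem they are equicontinuous, so by Ascoli's theorem the convergence is uniform on the
compact set `g(Ω)`, and in particular along the points `g(σⁿω)` of that set.
-/

open MeasureTheory Filter Topology

section UniformConvergence

variable {𝕜 E F : Type*} [NontriviallyNormedField 𝕜]
  [AddCommGroup E] [Module 𝕜 E] [UniformSpace E] [IsUniformAddGroup E] [ContinuousSMul 𝕜 E]
  [BarrelledSpace 𝕜 E]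
  [AddCommGroup F] [Module 𝕜 F] [UniformSpace F] [IsUniformAddGroup F] [ContinuousSMul 𝕜 F]
  [PolynormableSpace 𝕜 F]

theorem ContinuousLinearMap.tendstoUniformlyOn_zero_of_tendsto_zero {Λ : ℕ → E →L[𝕜] F}
    (hΛ : ∀ y, Tendsto (fun n => Λ n y) atTop (𝓝 0)) {K : Set E} (hK : IsCompact K) :
    TendstoUniformlyOn (fun n => ⇑(Λ n)) 0 atTop K := by
  have : CompactSpace K := isCompact_iff_compactSpace.mp hK
  have hequi : Equicontinuous (K.domRestrict ∘ fun n => ⇑(Λ n)) :=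
    (equicontinuous_restrict_iff _).2 <|
      (PolynormableSpace.banach_steinhaus fun y => (hΛ y).isVonNBounded_range 𝕜)
        |>.equicontinuous.equicontinuousOn K
  rw [tendstoUniformlyOn_iff_tendstoUniformly_comp_coe]
  exact UniformFun.tendsto_iff_tendstoUniformly.1 <|
    (hequi.tendsto_uniformFun_iff_pi _ _).2 (tendsto_pi_nhds.2 fun k => hΛ k)

theorem ContinuousLinearMap.tendsto_apply_of_tendsto_zero_of_mem_compact {Λ : ℕ → E →L[𝕜] F}
    (hΛ : ∀ y, Tendsto (fun n => Λ n y) atTop (𝓝 0)) {K : Set E} (hK : IsCompact K)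
    {y : ℕ → E} (hy : ∀ n, y n ∈ K) :
    Tendsto (fun n => Λ n (y n)) atTop (𝓝 0) :=
  Uniform.tendsto_nhds_right.2 fun _u hu =>
    (tendstoUniformlyOn_zero_of_tendsto_zero hΛ hK _ hu).mono fun n hn => hn (y n) (hy n)

end UniformConvergence

theorem prior_homogeneous_implies_prior_inhomogeneous_continuous_general
    {X : Type*} [MeasurableSpace X] (m : Measure X)
    {Ω : Type*} [TopologicalSpace Ω] [CompactSpace Ω]
    (σ : Ω → Ω)
    (P : Ω → Module.End ℝ (Lp ℝ 1 m))
    (Ω₀ : Set Ω)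
    (hmix : ∀ ω ∈ Ω₀, ∀ (f : Lp ℝ 1 m), ∫ x, f x ∂m = 0 → ∀ (g : Lp ℝ ⊤ m),
      Tendsto (fun n => ∫ x, (coc P σ n ω f) x * g x ∂m) atTop (𝓝 0)) :
    ∀ ω ∈ Ω₀, ∀ (f : Lp ℝ 1 m), ∫ x, f x ∂m = 0 →
      ∀ (g : Ω → Lp ℝ ⊤ m), Continuous g →
        Tendsto (fun n => ∫ x, (coc P σ n ω f) x * (g (σ^[n] ω)) x ∂m)
          atTop (𝓝 0) := by
  intro ω hω f hf g hg
  let Λ n := (ContinuousLinearMap.mul ℝ ℝ).lpPairing m 1 ⊤ (coc P σ n ω f)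
  have hΛ_apply n h : Λ n h = ∫ x, (coc P σ n ω f) x * h x ∂m :=
    ContinuousLinearMap.lpPairing_eq_integral _ _ _
  have hΛ_tendsto h : Tendsto (fun n => Λ n h) atTop (𝓝 0) := by
    simpa only [hΛ_apply] using hmix ω hω f hf h
  simpa only [hΛ_apply] using ContinuousLinearMap.tendsto_apply_of_tendsto_zero_of_mem_compact
    hΛ_tendsto (isCompact_range hg) fun n => Set.mem_range_self _

/-- If `Ω` is compact and the Markov operator cocycle `(P,σ)` is prior mixing for
homogeneous observables on a full-measure set `Ω₀`, then it is prior mixing for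
inhomogeneous observables in `C(Ω, L^∞(X,m))`: for all `ω ∈ Ω₀`, all mean-zero
`f ∈ L¹` and all bounded continuous `g : Ω → L^∞`,
`∫ P_ω^{(n)} f · g_{σⁿω} dm → 0`. -/
theorem prior_homogeneous_implies_prior_inhomogeneous_continuous
    {X : Type*} [MeasurableSpace X] (m : Measure X) [IsProbabilityMeasure m]
    {Ω : Type*} [TopologicalSpace Ω] [CompactSpace Ω]
    [MeasurableSpace Ω] [BorelSpace Ω]
    (Pr : Measure Ω) [IsProbabilityMeasure Pr]
    (σ : Ω → Ω) (hσ : MeasurePreserving σ Pr Pr)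
    (P : Ω → Module.End ℝ (Lp ℝ 1 m))
    (hP : ∀ᵐ ω ∂Pr, (∀ f : Lp ℝ 1 m, 0 ≤ f → 0 ≤ P ω f) ∧
      ∀ f : Lp ℝ 1 m, ∫ x, (P ω f) x ∂m = ∫ x, f x ∂m)
    (Ω₀ : Set Ω) (hΩ₀ : Pr Ω₀ = 1)
    (hmix : ∀ ω ∈ Ω₀, ∀ (f : Lp ℝ 1 m), ∫ x, f x ∂m = 0 → ∀ (g : Lp ℝ ⊤ m),
      Tendsto (fun n => ∫ x, (coc P σ n ω f) x * g x ∂m) atTop (𝓝 0)) :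
    ∀ ω ∈ Ω₀, ∀ (f : Lp ℝ 1 m), ∫ x, f x ∂m = 0 →
      ∀ (g : Ω → Lp ℝ ⊤ m), Continuous g →
        Tendsto (fun n => ∫ x, (coc P σ n ω f) x * (g (σ^[n] ω)) x ∂m)
          atTop (𝓝 0) :=
  prior_homogeneous_implies_prior_inhomogeneous_continuous_general m σ P Ω₀ hmix
end

section
/- Let (P,σ) be a Markov operator cocycle, S the closed unit ball of L^∞(X,m), and fix ω ∈ Ω. If f ∈ L^1(X,m) satisfies ∫_X f g dm = 0 for every g ∈ ⋂_{n≥1} P_ω^{*(n)} S, then ‖P_ω^{(n)} f‖_{L^1} → 0 as n → ∞. -/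
/-!
Markov operators are `L¹`-contractions, so `‖P_ω^{(n)} f‖` decreases to some limit `L`. By
Hahn–Banach choose unit functionals `ψ_n` norming `P_ω^{(n)} f`; then `φ_n = ψ_n ∘ P_ω^{(n)}`
satisfies `φ_n f = ‖P_ω^{(n)} f‖` and, by the cocycle identity, lies in the transposed unit ball
`P_ω^{*(k)} S` for every `n ≥ k`. These sets are weak-* compact (Banach–Alaoglu), so a weak-*
cluster point `φ` of `(φ_n)` lies in all of them and `φ f = L`. Since `(L¹)* = L^∞` for a finite
measure (via the Riesz representation on `L²`), `φ` is integration against some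
`g ∈ ⋂ₙ P_ω^{*(n)} S`, and the hypothesis gives `L = ∫ f g dm = 0`.
-/

open MeasureTheory Filter Topology

/-- The dual cocycle `P_ω^{*(n)} = P_ω^* ∘ P_{σω}^* ∘ ⋯ ∘ P_{σ^{n-1}ω}^*`. -/
noncomputable def dcoc {Ω M : Type*} [Monoid M] (Ps : Ω → M) (σ : Ω → Ω) : ℕ → Ω → M
  | 0, _ => 1
  | n + 1, ω => Ps ω * dcoc Ps σ n (σ ω)

section Cocycle

variable {Ω M : Type*} [Monoid M] (P : Ω → M) (σ : Ω → Ω)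

theorem coc_add (k j : ℕ) (ω : Ω) :
    coc P σ (k + j) ω = coc P σ j (σ^[k] ω) * coc P σ k ω := by
  induction j with
  | zero => simp [coc]
  | succ j ih =>
    rw [← add_assoc, coc, coc, ih, ← Function.iterate_add_apply, add_comm j k, mul_assoc]

theorem coc_map {N : Type*} [Monoid N] (φ : M →* N) (n : ℕ) (ω : Ω) :
    coc (φ ∘ P) σ n ω = φ (coc P σ n ω) := by
  induction n with
  | zero => simp [coc]
  | succ n ih => simp [coc, ih]

end Cocycle

section CocycleCLM

variable {Ω 𝕜 E F : Type*} [RCLike 𝕜] [NormedAddCommGroup E] [NormedSpace 𝕜 E]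
  [AddCommGroup F] [Module 𝕜 F] (σ : Ω → Ω)

theorem norm_coc_le_one {Q : Ω → E →L[𝕜] E} (hQ : ∀ ω, ‖Q ω‖ ≤ 1) (n : ℕ) (ω : Ω) :
    ‖coc Q σ n ω‖ ≤ 1 := by
  induction n with
  | zero => exact ContinuousLinearMap.norm_id_le
  | succ n ih => exact (norm_mul_le _ _).trans (mul_le_one₀ (hQ _) (norm_nonneg _) ih)

theorem exists_coc_eq_comp {Q : Ω → E →L[𝕜] E} (hQ : ∀ ω, ‖Q ω‖ ≤ 1) {k n : ℕ} (hkn : k ≤ n)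
    (ω : Ω) : ∃ R : E →L[𝕜] E, ‖R‖ ≤ 1 ∧ coc Q σ n ω = R.comp (coc Q σ k ω) :=
  ⟨coc Q σ (n - k) (σ^[k] ω), norm_coc_le_one σ hQ _ _, by
    rw [← ContinuousLinearMap.mul_def, ← coc_add, Nat.add_sub_cancel' hkn]⟩

theorem map_dcoc_eq_comp_coc {J : F → StrongDual 𝕜 E} {Ps : Ω → Module.End 𝕜 F}
    {Q : Ω → E →L[𝕜] E} (hJ : ∀ ω g, J (Ps ω g) = (J g).comp (Q ω)) (n : ℕ) (ω : Ω) (g : F) :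
    J (dcoc Ps σ n ω g) = (J g).comp (coc Q σ n ω) := by
  induction n generalizing ω with
  | zero => rfl
  | succ n ih =>
    rw [dcoc, Module.End.mul_apply, hJ, ih, add_comm, coc_add]
    rfl

end CocycleCLM

section LinCriterion

open WeakDual

variable {𝕜 E F G : Type*} [RCLike 𝕜] [NormedAddCommGroup E] [NormedSpace 𝕜 E]
  [NormedAddCommGroup F] [NormedSpace 𝕜 F] [NormedAddCommGroup G] [NormedSpace 𝕜 G]

/-- `T^* S` in the paper's notation, `S` the closed unit ball of the dual. -/
def transposeBall (T : E →L[𝕜] F) : Set (StrongDual 𝕜 E) :=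
  (fun ψ : StrongDual 𝕜 F => ψ.comp T) '' {ψ | ‖ψ‖ ≤ 1}

theorem transposeBall_comp_subset {R : F →L[𝕜] G} (hR : ‖R‖ ≤ 1) (T : E →L[𝕜] F) :
    transposeBall (R.comp T) ⊆ transposeBall T := by
  rintro _ ⟨ψ, hψ, rfl⟩
  exact ⟨ψ.comp R, (ψ.opNorm_comp_le R).trans (mul_le_one₀ hψ (norm_nonneg _) hR), rfl⟩

theorem isCompact_transposeBall (T : E →L[𝕜] F) :
    IsCompact (toStrongDual ⁻¹' transposeBall T) := by
  have hcont : Continuous fun ψ : WeakDual 𝕜 F =>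
      StrongDual.toWeakDual ((toStrongDual ψ).comp T) :=
    continuous_of_continuous_eval fun x => eval_continuous (T x)
  convert (isCompact_closedBall (0 : StrongDual 𝕜 F) 1).image hcont using 1
  ext φ
  simp only [transposeBall, Set.mem_preimage, Set.mem_image, Set.mem_ofPred_eq,
    mem_closedBall_zero_iff]
  exact ⟨fun ⟨ψ, hψ, h⟩ => ⟨ψ, hψ, h⟩, fun ⟨ψ, hψ, h⟩ => ⟨ψ, hψ, h⟩⟩

theorem tendsto_norm_apply_zero_of_forall_mem_transposeBall {T : ℕ → E →L[𝕜] E}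
    (hT : ∀ k n, k ≤ n → ∃ R : E →L[𝕜] E, ‖R‖ ≤ 1 ∧ T n = R.comp (T k)) {x : E}
    (hx : ∀ φ ∈ ⋂ k, transposeBall (T (k + 1)), φ x = 0) :
    Tendsto (fun n => ‖T n x‖) atTop (𝓝 0) := by
  have hanti : Antitone fun n => ‖T n x‖ := fun k n hkn => by
    obtain ⟨R, hR, hRT⟩ := hT k n hkn
    simpa [hRT] using R.le_of_opNorm_le hR (T k x)
  have hlim := tendsto_atTop_ciInf hanti ⟨0, by rintro _ ⟨n, rfl⟩; exact norm_nonneg _⟩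
  set L := ⨅ n, ‖T n x‖
  choose ψ hψ hψx using fun n => exists_dual_vector'' 𝕜 (T n x)
  set φ : ℕ → WeakDual 𝕜 E := fun n => StrongDual.toWeakDual ((ψ n).comp (T n))
  have hφ : ∀ k, ∀ᶠ n in atTop, φ n ∈ toStrongDual ⁻¹' transposeBall (T k) := fun k =>
    (eventually_ge_atTop k).mono fun n hkn => by
      obtain ⟨R, hR, hRT⟩ := hT k n hkn
      show (ψ n).comp (T n) ∈ transposeBall (T k)
      rw [hRT]
      exact transposeBall_comp_subset hR (T k) ⟨ψ n, hψ n, rfl⟩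
  obtain ⟨φ₀, -, hφ₀⟩ :=
    (isCompact_transposeBall (T 0)).exists_mapClusterPt (le_principal_iff.2 (hφ 0))
  have hmem : ∀ k, toStrongDual φ₀ ∈ transposeBall (T k) := fun k =>
    (isCompact_transposeBall (T k)).isClosed.mem_of_mapClusterPt hφ₀ (hφ k)
  have hφx : (fun φ' : WeakDual 𝕜 E => φ' x) ∘ φ = fun n => ((‖T n x‖ : ℝ) : 𝕜) :=
    funext fun n => hψx n
  have hclus := hφ₀.continuousAt_comp (eval_continuous x).continuousAt
  rw [hφx] at hclus
  have hL : φ₀ x = L :=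
    eq_of_nhds_neBot (ClusterPt.mono hclus ((RCLike.continuous_ofReal.tendsto L).comp hlim))
  have h0 : φ₀ x = 0 := hx (toStrongDual φ₀) (Set.mem_iInter.2 fun k => hmem (k + 1))
  rw [h0, eq_comm, RCLike.ofReal_eq_zero] at hL
  rwa [hL] at hlim

end LinCriterion

section LinftyDual

open scoped ENNReal

variable {X : Type*} [MeasurableSpace X] {m : Measure X}

theorem Lp.dual_ext_indicatorConstLp {p : ℝ≥0∞} [Fact (1 ≤ p)] (hp : p ≠ ∞)
    {φ ψ : StrongDual ℝ (Lp ℝ p m)}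
    (h : ∀ s (hs : MeasurableSet s) (hms : m s ≠ ∞),
      φ (indicatorConstLp p hs hms 1) = ψ (indicatorConstLp p hs hms 1)) :
    φ = ψ := by
  ext u
  induction u using Lp.induction hp with
  | @indicatorConst c s hs hms =>
    have hc : indicatorConstLp p hs hms.ne c = c • indicatorConstLp p hs hms.ne (1 : ℝ) := by
      refine Lp.ext ?_
      filter_upwards [Lp.coeFn_smul c (indicatorConstLp p hs hms.ne (1 : ℝ)),
        indicatorConstLp_coeFn (hs := hs) (hμs := hms.ne) (c := c),
        indicatorConstLp_coeFn (hs := hs) (hμs := hms.ne) (c := (1 : ℝ))] with x h1 h2 h3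
      rw [h1, Pi.smul_apply, h2, h3]
      by_cases hx : x ∈ s <;> simp [hx]
    rw [Lp.simpleFunc.coe_indicatorConst, hc, map_smul, map_smul, h]
  | add _ _ _ hφψ₁ hφψ₂ => rw [map_add, map_add, hφψ₁, hφψ₂]
  | isClosed => exact isClosed_eq φ.continuous ψ.continuous

variable (m) in
noncomputable def linftyToDual : Lp ℝ ⊤ m →L[ℝ] StrongDual ℝ (Lp ℝ 1 m) :=
  ((ContinuousLinearMap.mul ℝ ℝ).lpPairing m 1 ⊤).flip

theorem linftyToDual_apply (g : Lp ℝ ⊤ m) (u : Lp ℝ 1 m) :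
    linftyToDual m g u = ∫ x, u x * g x ∂m :=
  (ContinuousLinearMap.mul ℝ ℝ).lpPairing_eq_integral u g

theorem linftyToDual_indicatorConstLp (g : Lp ℝ ⊤ m) {s : Set X} (hs : MeasurableSet s)
    (hms : m s ≠ ∞) : linftyToDual m g (indicatorConstLp 1 hs hms 1) = ∫ x in s, g x ∂m := by
  rw [linftyToDual_apply, ← integral_indicator hs]
  refine integral_congr_ae ?_
  filter_upwards [indicatorConstLp_coeFn (p := 1) (hs := hs) (hμs := hms) (c := (1 : ℝ))] with x hx
  by_cases hxs : x ∈ s <;> simp [hx, hxs]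

theorem linftyToDual_injective [SigmaFinite m] : Function.Injective (linftyToDual m) := by
  intro g g' h
  refine Lp.ext (ae_eq_of_forall_setIntegral_eq_of_sigmaFinite
    (fun s _ hms => integrableOn_Lp_of_measure_ne_top g le_top hms.ne)
    (fun s _ hms => integrableOn_Lp_of_measure_ne_top g' le_top hms.ne) fun s hs hms => ?_)
  rw [← linftyToDual_indicatorConstLp g hs hms.ne, h, linftyToDual_indicatorConstLp]

theorem ae_abs_le_of_forall_abs_setIntegral_le [IsFiniteMeasure m] {f : X → ℝ}
    (hf : Integrable f m) {C : ℝ}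
    (h : ∀ s, MeasurableSet s → m s < ∞ → |∫ x in s, f x ∂m| ≤ C * m.real s) :
    ∀ᵐ x ∂m, |f x| ≤ C := by
  have hle : f ≤ᵐ[m] fun _ => C :=
    ae_le_of_forall_setIntegral_le hf (integrable_const C) fun s hs hms => by
      rw [setIntegral_const, smul_eq_mul, mul_comm]
      exact (abs_le.1 (h s hs hms)).2
  have hge : (fun _ => -C) ≤ᵐ[m] f :=
    ae_le_of_forall_setIntegral_le (integrable_const (-C)) hf fun s hs hms => by
      rw [setIntegral_const, smul_eq_mul, mul_neg, mul_comm]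
      exact (abs_le.1 (h s hs hms)).1
  filter_upwards [hle, hge] with x h₁ h₂
  exact abs_le.2 ⟨h₂, h₁⟩

theorem exists_L2_setIntegral_eq [IsFiniteMeasure m] (φ : StrongDual ℝ (Lp ℝ 1 m)) :
    ∃ w : Lp ℝ 2 m, ∀ s (hs : MeasurableSet s) (hms : m s ≠ ∞),
      φ (indicatorConstLp 1 hs hms 1) = ∫ x in s, w x ∂m := by
  -- the inclusion `L² → L¹`, as multiplication by `1 ∈ L²`
  let j : Lp ℝ 2 m →L[ℝ] Lp ℝ 1 m :=
    ((ContinuousLinearMap.mul ℝ ℝ).holderL m 2 2 1).flip (Lp.const 2 m 1)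
  have hj : ∀ s (hs : MeasurableSet s) (hms : m s ≠ ∞),
      j (indicatorConstLp 2 hs hms 1) = indicatorConstLp 1 hs hms 1 := fun s hs hms => by
    refine Lp.ext ?_
    filter_upwards [ContinuousLinearMap.coeFn_holder (r := 1) (ContinuousLinearMap.mul ℝ ℝ)
        (indicatorConstLp 2 hs hms (1 : ℝ)) (Lp.const 2 m (1 : ℝ)),
      Lp.coeFn_const (p := 2) (μ := m) (c := (1 : ℝ)),
      indicatorConstLp_coeFn (p := 1) (hs := hs) (hμs := hms) (c := (1 : ℝ)),
      indicatorConstLp_coeFn (p := 2) (hs := hs) (hμs := hms) (c := (1 : ℝ))] with x h₁ h₂ h₃ h₄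
    rw [h₃, ContinuousLinearMap.flip_apply, ContinuousLinearMap.holderL_apply_apply, h₁,
      ContinuousLinearMap.mul_apply', h₂, h₄]
    simp
  refine ⟨(InnerProductSpace.toDual ℝ _).symm (φ.comp j), fun s hs hms => ?_⟩
  rw [← L2.inner_indicatorConstLp_one hs hms, real_inner_comm,
    InnerProductSpace.toDual_symm_apply, ContinuousLinearMap.comp_apply, hj]

theorem exists_linftyToDual_eq [IsFiniteMeasure m] (φ : StrongDual ℝ (Lp ℝ 1 m)) :
    ∃ g : Lp ℝ ⊤ m, ‖g‖ ≤ ‖φ‖ ∧ linftyToDual m g = φ := by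
  obtain ⟨w, hw⟩ := exists_L2_setIntegral_eq φ
  have hbound : ∀ᵐ x ∂m, |w x| ≤ ‖φ‖ :=
    ae_abs_le_of_forall_abs_setIntegral_le ((Lp.memLp w).integrable one_le_two)
      fun s hs hms => by
        rw [← hw s hs hms.ne, ← Real.norm_eq_abs]
        refine (φ.le_opNorm _).trans_eq ?_
        rw [norm_indicatorConstLp one_ne_zero ENNReal.one_ne_top]
        simp
  have hw_top : MemLp w ⊤ m := memLp_top_of_bound (Lp.aestronglyMeasurable w) _ hbound
  refine ⟨hw_top.toLp w, ?_, Lp.dual_ext_indicatorConstLp ENNReal.one_ne_top fun s hs hms => ?_⟩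
  · refine (Lp.norm_le_of_ae_bound (norm_nonneg φ) ?_).trans_eq (by simp)
    filter_upwards [hw_top.coeFn_toLp, hbound] with x hx hb
    rwa [hx, Real.norm_eq_abs]
  · rw [linftyToDual_indicatorConstLp, hw]
    exact integral_congr_ae (ae_restrict_of_ae hw_top.coeFn_toLp)

theorem exists_mem_iInter_image_of_mem_iInter_transposeBall {ι : Type*} [IsFiniteMeasure m]
    [Nonempty ι] {A : ι → Lp ℝ ⊤ m → Lp ℝ ⊤ m} {T : ι → Lp ℝ 1 m →L[ℝ] Lp ℝ 1 m}
    (hAT : ∀ i g, linftyToDual m (A i g) = (linftyToDual m g).comp (T i))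
    {φ : StrongDual ℝ (Lp ℝ 1 m)} (hφ : φ ∈ ⋂ i, transposeBall (T i)) :
    ∃ g ∈ ⋂ i, A i '' {u | ‖u‖ ≤ 1}, linftyToDual m g = φ := by
  have hrep : ∀ i, ∃ g, ‖g‖ ≤ 1 ∧ linftyToDual m (A i g) = φ := fun i => by
    obtain ⟨ψ, hψ, rfl⟩ := Set.mem_iInter.1 hφ i
    obtain ⟨g, hg, rfl⟩ := exists_linftyToDual_eq ψ
    exact ⟨g, hg.trans hψ, hAT i g⟩
  choose g hg hAg using hrep
  obtain ⟨i₀⟩ := ‹Nonempty ι›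
  refine ⟨A i₀ (g i₀), Set.mem_iInter.2 fun i => ⟨g i, hg i, ?_⟩, hAg i₀⟩
  exact linftyToDual_injective ((hAg i).trans (hAg i₀).symm)

end LinftyDual

section Markov

variable {X : Type*} [MeasurableSpace X] {m : Measure X}

def IsMarkov (Q : Module.End ℝ (Lp ℝ 1 m)) : Prop :=
  (∀ f : Lp ℝ 1 m, 0 ≤ f → 0 ≤ Q f) ∧ ∀ f : Lp ℝ 1 m, ∫ x, (Q f) x ∂m = ∫ x, f x ∂m

theorem L1.norm_eq_integral_of_nonneg {v : Lp ℝ 1 m} (hv : 0 ≤ v) : ‖v‖ = ∫ x, v x ∂m := by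
  rw [L1.norm_eq_integral_norm]
  refine integral_congr_ae ?_
  filter_upwards [(Lp.coeFn_nonneg v).2 hv] with x hx
  exact Real.norm_of_nonneg hx

namespace IsMarkov

variable {Q : Module.End ℝ (Lp ℝ 1 m)}

theorem abs_apply_le (hQ : IsMarkov Q) (u : Lp ℝ 1 m) : |Q u| ≤ Q |u| := by
  refine abs_le'.2 ⟨sub_nonneg.1 ?_, sub_nonneg.1 ?_⟩
  · rw [← map_sub]
    exact hQ.1 _ (sub_nonneg.2 (le_abs_self u))
  · rw [sub_neg_eq_add, ← map_add]
    exact hQ.1 _ (neg_le_iff_add_nonneg.1 (neg_le_abs u))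

theorem norm_apply_le (hQ : IsMarkov Q) (u : Lp ℝ 1 m) : ‖Q u‖ ≤ ‖u‖ := by
  have hQu : 0 ≤ Q |u| := hQ.1 _ (abs_nonneg u)
  calc ‖Q u‖ ≤ ‖Q |u|‖ :=
        norm_le_norm_of_abs_le_abs (by rw [abs_of_nonneg hQu]; exact hQ.abs_apply_le u)
    _ = ∫ x, |u| x ∂m := by rw [L1.norm_eq_integral_of_nonneg hQu, hQ.2]
    _ = ‖u‖ := by rw [← L1.norm_eq_integral_of_nonneg (abs_nonneg u), norm_abs_eq_norm]

noncomputable def toCLM (hQ : IsMarkov Q) : Lp ℝ 1 m →L[ℝ] Lp ℝ 1 m :=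
  Q.mkContinuous 1 fun u => by simpa using hQ.norm_apply_le u

theorem norm_toCLM_le (hQ : IsMarkov Q) : ‖hQ.toCLM‖ ≤ 1 :=
  LinearMap.mkContinuous_norm_le _ zero_le_one _

end IsMarkov

end Markov

theorem lin_criterion_sufficiency_general
    {X : Type*} [MeasurableSpace X] (m : Measure X) [IsProbabilityMeasure m]
    {Ω : Type*}
    (σ : Ω → Ω)
    (P : Ω → Module.End ℝ (Lp ℝ 1 m))
    (hP : ∀ ω, (∀ f : Lp ℝ 1 m, 0 ≤ f → 0 ≤ P ω f) ∧
      ∀ f : Lp ℝ 1 m, ∫ x, (P ω f) x ∂m = ∫ x, f x ∂m)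
    (Ps : Ω → Module.End ℝ (Lp ℝ ⊤ m))
    (hdual : ∀ (ω : Ω) (f : Lp ℝ 1 m) (g : Lp ℝ ⊤ m),
      ∫ x, (P ω f) x * g x ∂m = ∫ x, f x * (Ps ω g) x ∂m)
    (ω : Ω) (f : Lp ℝ 1 m)
    (hf : ∀ g ∈ ⋂ n : ℕ, ⇑(dcoc Ps σ (n + 1) ω) '' {u : Lp ℝ ⊤ m | ‖u‖ ≤ 1},
      ∫ x, f x * g x ∂m = 0) :
    Tendsto (fun n => ‖coc P σ n ω f‖) atTop (𝓝 0) := by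
  let Q ω : Lp ℝ 1 m →L[ℝ] Lp ℝ 1 m := IsMarkov.toCLM (hP ω)
  have hQ ω : ‖Q ω‖ ≤ 1 := IsMarkov.norm_toCLM_le (hP ω)
  have hPQ n : coc P σ n ω = coc Q σ n ω :=
    coc_map Q σ ContinuousLinearMap.toLinearMapRingHom.toMonoidHom n ω
  have hQdual ω g : linftyToDual m (Ps ω g) = (linftyToDual m g).comp (Q ω) := by
    ext u
    simp only [linftyToDual_apply, ContinuousLinearMap.comp_apply]
    exact (hdual ω u g).symm
  simp only [hPQ]
  refine tendsto_norm_apply_zero_of_forall_mem_transposeBall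
    (fun k n hkn => exists_coc_eq_comp σ hQ hkn ω) fun φ hφ => ?_
  obtain ⟨g, hg, rfl⟩ := exists_mem_iInter_image_of_mem_iInter_transposeBall
    (A := fun k => ⇑(dcoc Ps σ (k + 1) ω)) (fun k => map_dcoc_eq_comp_coc σ hQdual (k + 1) ω) hφ
  rw [linftyToDual_apply]
  exact hf g hg

/-- (Lin's criterion, hard direction, for Markov operator cocycles.) Fix `ω`.
If `f ∈ L¹` satisfies `∫ f g dm = 0` for every `g ∈ ⋂_{n≥1} P_ω^{*(n)} S`
(`S` the unit ball of `L^∞`), then `‖P_ω^{(n)} f‖₁ → 0`. -/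
theorem lin_criterion_sufficiency
    {X : Type*} [MeasurableSpace X] (m : Measure X) [IsProbabilityMeasure m]
    {Ω : Type*} [MeasurableSpace Ω] (Pr : Measure Ω) [IsProbabilityMeasure Pr]
    (σ : Ω → Ω) (hσ : MeasurePreserving σ Pr Pr)
    (P : Ω → Module.End ℝ (Lp ℝ 1 m))
    (hP : ∀ ω, (∀ f : Lp ℝ 1 m, 0 ≤ f → 0 ≤ P ω f) ∧
      ∀ f : Lp ℝ 1 m, ∫ x, (P ω f) x ∂m = ∫ x, f x ∂m)
    (Ps : Ω → Module.End ℝ (Lp ℝ ⊤ m))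
    (hdual : ∀ (ω : Ω) (f : Lp ℝ 1 m) (g : Lp ℝ ⊤ m),
      ∫ x, (P ω f) x * g x ∂m = ∫ x, f x * (Ps ω g) x ∂m)
    (hcontr : ∀ (ω : Ω) (g : Lp ℝ ⊤ m), ‖Ps ω g‖ ≤ ‖g‖)
    (ω : Ω) (f : Lp ℝ 1 m)
    (hf : ∀ g ∈ ⋂ n : ℕ, ⇑(dcoc Ps σ (n + 1) ω) '' {u : Lp ℝ ⊤ m | ‖u‖ ≤ 1},
      ∫ x, f x * g x ∂m = 0) :
    Tendsto (fun n => ‖coc P σ n ω f‖) atTop (𝓝 0) :=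
  lin_criterion_sufficiency_general m σ P hP Ps hdual ω f hf
end

section
/- Let the Markov operator cocycle (P,σ) be induced by Perron–Frobenius operators of non-singular transformations T_ω: X → X (P_ω = L_{T_ω}). Then (P,σ) is exact if and only if for ℙ-a.e. ω ∈ Ω the tail σ-field ⋂_{n≥1} (T_ω^n)^{-1}𝒜 is trivial mod m (equals {∅, X} up to m-null sets), where T_ω^n = T_{σ^{n−1}ω} ∘ ⋯ ∘ T_ω. -/
open MeasureTheory Filter Topology

/-- The cocycle `T_ω^n = T_{σ^{n-1}ω} ∘ ⋯ ∘ T_ω` of maps on `X`. -/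
noncomputable def mapCoc {Ω X : Type*} (T : Ω → X → X) (σ : Ω → Ω) : ℕ → Ω → X → X
  | 0, _ => id
  | n + 1, ω => T (σ^[n] ω) ∘ mapCoc T σ n ω

/-!
Koopman duality `∫ P_ω^{(n)} f · g dm = ∫ f · g ∘ T_ω^n dm` (bounded `g`) yields
`‖P_ω^{(n)} f‖₁ = ∫ f · k dm` for some `(T_ω^n)⁻¹𝒜`-measurable `k` with `|k| ≤ 1`. Hence `P_ω^{(n)}`
contracts `L¹`, and for `f ∈ L²` the `L¹` norm of `P_ω^{(n)} f` is at most the `L²` norm of the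
orthogonal projection of `f` onto `L²((T_ω^n)⁻¹𝒜)`. These subspaces decrease, so the projections
converge to the projection onto their intersection, which consists of tail-measurable functions,
i.e. of constants when the tail is trivial; a mean-zero `f` is orthogonal to them. Density of
`L²` in `L¹` then gives exactness.

Conversely, if `A = (T_ω^n)⁻¹ B_n` for all `n`, then pairing `P_ω^{(n)} (1_A - m A)` with `1_{B_n}`
gives `‖P_ω^{(n)} (1_A - m A)‖₁ ≥ m A (1 - m A)`, so exactness forces `m A ∈ {0, 1}`.
-/

open scoped RealInnerProductSpace

theorem tendsto_starProjection_zero_of_antitone {E : Type*} [NormedAddCommGroup E]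
    [InnerProductSpace ℝ E] [CompleteSpace E] (K : ℕ → Submodule ℝ E)
    [∀ n, (K n).HasOrthogonalProjection] (hK : Antitone K) {x : E} (hx : x ∈ (⨅ n, K n)ᗮ) :
    Tendsto (fun n => (K n).starProjection x) atTop (𝓝 0) := by
  set W := (⨆ n, (K n)ᗮ).topologicalClosure
  have hxW : x ∈ W := by
    rwa [← Submodule.orthogonal_orthogonal W, Submodule.orthogonal_closure,
      ← Submodule.iInf_orthogonal, iInf_congr fun n => Submodule.orthogonal_orthogonal (K n)]
  have h := Submodule.starProjection_tendsto_closure_iSup (fun n => (K n)ᗮ)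
    (fun i j hij => Submodule.orthogonal_le (hK hij)) x
  rw [(Submodule.starProjection_eq_self_iff).2 hxW] at h
  simpa using (tendsto_const_nhds (x := x)).sub h

namespace MeasureTheory

variable {X : Type*} [MeasurableSpace X] {m : Measure X}

theorem L1.exists_norm_eq_integral_mul (u : Lp ℝ 1 m) :
    ∃ y : X → ℝ, Measurable y ∧ (∀ x, ‖y x‖ ≤ 1) ∧ ‖u‖ = ∫ x, u x * y x ∂m := by
  have hu := Lp.aestronglyMeasurable u
  refine ⟨fun x => if 0 ≤ hu.mk u x then 1 else -1,
    Measurable.ite (measurableSet_le measurable_const hu.stronglyMeasurable_mk.measurable)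
      measurable_const measurable_const,
    fun x => by dsimp only; split_ifs <;> simp, ?_⟩
  rw [L1.norm_eq_integral_norm]
  refine integral_congr_ae ?_
  filter_upwards [hu.ae_eq_mk] with x hx
  rw [hx, Real.norm_eq_abs]
  split_ifs with h
  · rw [abs_of_nonneg h, mul_one]
  · rw [abs_of_neg (not_le.1 h), mul_neg_one]

theorem L1.abs_integral_mul_le_norm (u : Lp ℝ 1 m) {k : X → ℝ} (hk : ∀ x, ‖k x‖ ≤ 1) :
    |∫ x, u x * k x ∂m| ≤ ‖u‖ := by
  rw [← Real.norm_eq_abs, L1.norm_eq_integral_norm]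
  refine norm_integral_le_of_norm_le (L1.integrable_coeFn u).norm (ae_of_all _ fun x => ?_)
  rw [norm_mul]
  exact mul_le_of_le_one_right (norm_nonneg _) (hk x)

theorem L2.real_inner_eq_integral_mul (φ ψ : Lp ℝ 2 m) : ⟪φ, ψ⟫ = ∫ x, φ x * ψ x ∂m := by
  simp [L2.inner_def, mul_comm]

end MeasureTheory

section Cocycle

variable {X Ω : Type*} [MeasurableSpace X] {m : Measure X} {σ : Ω → Ω} {T : Ω → X → X}

def IsPerronFrobenius (P : Ω → Module.End ℝ (Lp ℝ 1 m)) (T : Ω → X → X) : Prop :=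
  ∀ (ω : Ω) (f : Lp ℝ 1 m) (g : Lp ℝ ⊤ m), ∫ x, (P ω f) x * g x ∂m = ∫ x, f x * g (T ω x) ∂m

theorem quasiMeasurePreserving_mapCoc (hT : ∀ ω, Measure.QuasiMeasurePreserving (T ω) m m)
    (n : ℕ) (ω : Ω) : Measure.QuasiMeasurePreserving (mapCoc T σ n ω) m m := by
  induction n with
  | zero => exact Measure.QuasiMeasurePreserving.id m
  | succ n ih => exact (hT _).comp ih

namespace IsPerronFrobenius

variable {P : Ω → Module.End ℝ (Lp ℝ 1 m)}

theorem integral_mul_comp (hPF : IsPerronFrobenius P T)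
    (hT : ∀ ω, Measure.QuasiMeasurePreserving (T ω) m m) (ω : Ω) (f : Lp ℝ 1 m)
    {y : X → ℝ} (hy : Measurable y) {C : ℝ} (hyC : ∀ x, ‖y x‖ ≤ C) :
    ∫ x, (P ω f) x * y x ∂m = ∫ x, f x * y (T ω x) ∂m := by
  have hyLp : MemLp y ⊤ m := memLp_top_of_bound hy.aestronglyMeasurable C (ae_of_all _ hyC)
  have hg := hyLp.coeFn_toLp
  calc ∫ x, (P ω f) x * y x ∂m = ∫ x, (P ω f) x * hyLp.toLp y x ∂m :=
        integral_congr_ae (EventuallyEq.rfl.mul hg.symm)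
    _ = ∫ x, f x * hyLp.toLp y (T ω x) ∂m := hPF ω f _
    _ = ∫ x, f x * y (T ω x) ∂m := integral_congr_ae (EventuallyEq.rfl.mul ((hT ω).ae_eq_comp hg))

theorem integral_coc_mul (hPF : IsPerronFrobenius P T)
    (hT : ∀ ω, Measure.QuasiMeasurePreserving (T ω) m m) (n : ℕ) (ω : Ω) (f : Lp ℝ 1 m)
    {y : X → ℝ} (hy : Measurable y) {C : ℝ} (hyC : ∀ x, ‖y x‖ ≤ C) :
    ∫ x, (coc P σ n ω f) x * y x ∂m = ∫ x, f x * y (mapCoc T σ n ω x) ∂m := by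
  induction n generalizing y with
  | zero => rfl
  | succ n ih =>
    calc ∫ x, (coc P σ (n + 1) ω f) x * y x ∂m
        = ∫ x, (P (σ^[n] ω) (coc P σ n ω f)) x * y x ∂m := rfl
      _ = ∫ x, (coc P σ n ω f) x * y (T (σ^[n] ω) x) ∂m := hPF.integral_mul_comp hT _ _ hy hyC
      _ = ∫ x, f x * y (mapCoc T σ (n + 1) ω x) ∂m :=
        ih (hy.comp (hT _).measurable) fun x => hyC _

theorem norm_coc_le (hPF : IsPerronFrobenius P T)
    (hT : ∀ ω, Measure.QuasiMeasurePreserving (T ω) m m) (n : ℕ) (ω : Ω) (f : Lp ℝ 1 m) :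
    ‖coc P σ n ω f‖ ≤ ‖f‖ := by
  obtain ⟨y, hy, hy1, hnorm⟩ := L1.exists_norm_eq_integral_mul (coc P σ n ω f)
  rw [hnorm, hPF.integral_coc_mul hT n ω f hy hy1]
  exact (le_abs_self _).trans (L1.abs_integral_mul_le_norm f fun x => hy1 _)

end IsPerronFrobenius

end Cocycle

section TailTrivial

variable {X : Type*} [MeasurableSpace X] {m : Measure X}

theorem exists_measurableSet_iInf_ae_eq {𝒢 : ℕ → MeasurableSpace X} (h𝒢 : Antitone 𝒢)
    {s : Set X} {t : ℕ → Set X} (ht : ∀ n, MeasurableSet[𝒢 n] (t n))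
    (hts : ∀ n, t n =ᵐ[m] s) : ∃ u, MeasurableSet[⨅ n, 𝒢 n] u ∧ u =ᵐ[m] s := by
  set A : ℕ → Set X := fun N => ⋃ k, t (N + k)
  have hA : Antitone A := fun i j hij => Set.iUnion_subset fun k =>
    Set.subset_iUnion_of_subset (j - i + k) (by rw [show i + (j - i + k) = j + k by omega])
  refine ⟨⋂ N, A N, MeasurableSpace.measurableSet_iInf.2 fun j => ?_, ?_⟩
  · rw [← Set.iInf_eq_iInter, ← hA.iInf_nat_add j]
    exact MeasurableSet.iInter fun N => MeasurableSet.iUnion fun k =>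
      h𝒢 (by omega : j ≤ N + j + k) _ (ht _)
  · refine eventuallyEq_set.2 ?_
    filter_upwards [ae_all_iff.2 fun n => eventuallyEq_set.1 (hts n)] with x hx
    simp [A, hx]

theorem exists_ae_eq_const_of_iInf_trivial {𝒢 : ℕ → MeasurableSpace X} (h𝒢 : Antitone 𝒢)
    (htriv : ∀ s, MeasurableSet[⨅ n, 𝒢 n] s → m s = 0 ∨ m sᶜ = 0) {g : X → ℝ}
    (hg : ∀ n, AEStronglyMeasurable[𝒢 n] g m) : ∃ c, g =ᵐ[m] fun _ => c := by
  refine exists_eventuallyEq_const_of_forall_separating MeasurableSet fun U hU => ?_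
  obtain ⟨u, hu, hug⟩ := exists_measurableSet_iInf_ae_eq h𝒢
    (fun n => (hg n).stronglyMeasurable_mk.measurable hU)
    (fun n => ((hg n).ae_eq_mk.preimage U).symm)
  rcases htriv u hu with h | h
  · exact .inr (measure_eq_zero_iff_ae_notMem.1 ((measure_congr hug).symm.trans h))
  · exact .inl (mem_ae_iff.2 ((measure_congr hug.compl).symm.trans h))

theorem tendsto_starProjection_lpMeas_of_iInf_trivial {𝒢 : ℕ → MeasurableSpace X}
    (h𝒢 : Antitone 𝒢) [∀ n, Fact (𝒢 n ≤ ‹MeasurableSpace X›)]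
    (htriv : ∀ s, MeasurableSet[⨅ n, 𝒢 n] s → m s = 0 ∨ m sᶜ = 0)
    {φ : Lp ℝ 2 m} (hφ : ∫ x, φ x ∂m = 0) :
    Tendsto (fun n => (lpMeas ℝ ℝ (𝒢 n) 2 m).starProjection φ) atTop (𝓝 0) := by
  refine tendsto_starProjection_zero_of_antitone _ (fun i j hij k hk => ?_)
    ((Submodule.mem_orthogonal _ _).2 fun k hk => ?_)
  · exact mem_lpMeas_iff_aestronglyMeasurable.2
      ((mem_lpMeas_iff_aestronglyMeasurable.1 hk).mono (h𝒢 hij))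
  · obtain ⟨c, hc⟩ := exists_ae_eq_const_of_iInf_trivial h𝒢 htriv fun n =>
      mem_lpMeas_iff_aestronglyMeasurable.1 ((Submodule.mem_iInf _).1 hk n)
    rw [L2.real_inner_eq_integral_mul,
      integral_congr_ae (f := fun x => k x * φ x) (g := fun x => c * φ x) (hc.mul .rfl),
      integral_const_mul, hφ, mul_zero]

end TailTrivial

section L1Approximation

variable {X : Type*} [MeasurableSpace X] {m : Measure X} [IsProbabilityMeasure m]

theorem exists_memLp_two_integral_eq_zero_norm_sub_lt (f : Lp ℝ 1 m)
    (hf : ∫ x, f x ∂m = 0) {ε : ℝ} (hε : 0 < ε) :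
    ∃ φ : Lp ℝ 1 m, MemLp φ 2 m ∧ ∫ x, φ x ∂m = 0 ∧ ‖f - φ‖ < ε := by
  obtain ⟨s, hs⟩ := (Lp.simpleFunc.denseRange ENNReal.one_ne_top).exists_dist_lt f (half_pos hε)
  set c := ∫ x, (s : Lp ℝ 1 m) x ∂m
  have hc : |c| ≤ ‖f - s‖ := by
    have hcs : c = L1.integral ((s : Lp ℝ 1 m) - f) := by
      rw [L1.integral_sub, L1.integral_eq_integral, L1.integral_eq_integral, hf, sub_zero]
    rw [hcs, ← Real.norm_eq_abs, norm_sub_rev]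
    exact L1.norm_integral_le _
  have hφ : ((s : Lp ℝ 1 m) - Lp.const 1 m c : Lp ℝ 1 m) =ᵐ[m]
      fun x => Lp.simpleFunc.toSimpleFunc s x - c := by
    filter_upwards [Lp.coeFn_sub (s : Lp ℝ 1 m) (Lp.const 1 m c), Lp.coeFn_const 1 m c,
      Lp.simpleFunc.toSimpleFunc_eq_toFun s] with x h1 h2 h3
    rw [h1, Pi.sub_apply, h2, ← h3]
    rfl
  refine ⟨s - Lp.const 1 m c, ?_, ?_, ?_⟩
  · exact ((SimpleFunc.memLp_of_isFiniteMeasure _ 2 m).sub (memLp_const c)).ae_eq hφ.symm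
  · rw [integral_congr_ae hφ, integral_sub (SimpleFunc.integrable_of_isFiniteMeasure _)
      (integrable_const c), integral_congr_ae (Lp.simpleFunc.toSimpleFunc_eq_toFun s)]
    simp [c]
  · calc ‖f - (s - Lp.const 1 m c)‖ = ‖(f - s) + Lp.const 1 m c‖ := by abel_nf
      _ ≤ ‖f - s‖ + |c| := by
        refine (norm_add_le _ _).trans_eq ?_
        rw [Lp.norm_const _ _ _ one_ne_zero, probReal_univ]
        simp
      _ < ε := by
        rw [dist_eq_norm] at hs
        linarith

end L1Approximation

section TailSigma

variable {X Ω : Type*} [MeasurableSpace X] {σ : Ω → Ω} {T : Ω → X → X}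

noncomputable abbrev comapMapCoc (T : Ω → X → X) (σ : Ω → Ω) (n : ℕ) (ω : Ω) :
    MeasurableSpace X :=
  MeasurableSpace.comap (mapCoc T σ n ω) ‹MeasurableSpace X›

theorem measurable_mapCoc (hT : ∀ ω, Measurable (T ω)) (n : ℕ) (ω : Ω) :
    Measurable (mapCoc T σ n ω) := by
  induction n with
  | zero => exact measurable_id
  | succ n ih => exact (hT _).comp ih

theorem comapMapCoc_le (hT : ∀ ω, Measurable (T ω)) (n : ℕ) (ω : Ω) :
    comapMapCoc T σ n ω ≤ ‹MeasurableSpace X› :=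
  (measurable_mapCoc hT n ω).comap_le

theorem antitone_comapMapCoc (hT : ∀ ω, Measurable (T ω)) (ω : Ω) :
    Antitone fun n => comapMapCoc T σ n ω :=
  antitone_nat_of_succ_le fun n => by
    rw [comapMapCoc, comapMapCoc, mapCoc, ← MeasurableSpace.comap_comp]
    exact MeasurableSpace.comap_mono (hT _).comap_le

end TailSigma

namespace IsPerronFrobenius

variable {X Ω : Type*} [MeasurableSpace X] {m : Measure X} [IsProbabilityMeasure m]
  {σ : Ω → Ω} {T : Ω → X → X} {P : Ω → Module.End ℝ (Lp ℝ 1 m)}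

theorem norm_coc_le_norm_starProjection (hPF : IsPerronFrobenius P T)
    (hT : ∀ ω, Measure.QuasiMeasurePreserving (T ω) m m) (n : ℕ) (ω : Ω)
    [Fact (comapMapCoc T σ n ω ≤ ‹MeasurableSpace X›)] {f : Lp ℝ 1 m} {φ : Lp ℝ 2 m}
    (hfφ : (f : X → ℝ) =ᵐ[m] φ) :
    ‖coc P σ n ω f‖ ≤ ‖(lpMeas ℝ ℝ (comapMapCoc T σ n ω) 2 m).starProjection φ‖ := by
  set K := lpMeas ℝ ℝ (comapMapCoc T σ n ω) 2 m
  obtain ⟨y, hy, hy1, hnorm⟩ := L1.exists_norm_eq_integral_mul (coc P σ n ω f)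
  have hk : MemLp (y ∘ mapCoc T σ n ω) 2 m :=
    .of_bound (hy.comp (quasiMeasurePreserving_mapCoc hT n ω).measurable).aestronglyMeasurable 1
      (ae_of_all _ fun x => hy1 _)
  set k : Lp ℝ 2 m := hk.toLp _
  have hkK : k ∈ K := mem_lpMeas_iff_aestronglyMeasurable.2
    ⟨_, (hy.comp (comap_measurable _)).stronglyMeasurable, hk.coeFn_toLp⟩
  have hk1 : ‖k‖ ≤ 1 := by
    have h := Lp.norm_le_of_ae_bound (f := k) zero_le_one
      (hk.coeFn_toLp.mono fun x hx => by rw [hx]; exact hy1 _)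
    simpa only [measureUnivNNReal, measure_univ, ENNReal.toNNReal_one, NNReal.coe_one,
      Real.one_rpow, mul_one] using h
  calc ‖coc P σ n ω f‖ = ∫ x, f x * y (mapCoc T σ n ω x) ∂m := by
        rw [hnorm, hPF.integral_coc_mul hT n ω f hy hy1]
    _ = ⟪φ, k⟫ := by
        rw [L2.real_inner_eq_integral_mul]
        exact integral_congr_ae (hfφ.mul hk.coeFn_toLp.symm)
    _ = ⟪K.starProjection φ, k⟫ := by
        rw [K.inner_starProjection_left_eq_right, Submodule.starProjection_eq_self_iff.2 hkK]
    _ ≤ ‖K.starProjection φ‖ * ‖k‖ := real_inner_le_norm _ _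
    _ ≤ ‖K.starProjection φ‖ := mul_le_of_le_one_right (norm_nonneg _) hk1

theorem tendsto_coc_of_tail_trivial (hPF : IsPerronFrobenius P T)
    (hT : ∀ ω, Measure.QuasiMeasurePreserving (T ω) m m) (ω : Ω)
    (htriv : ∀ A, (∀ n, MeasurableSet[comapMapCoc T σ (n + 1) ω] A) → m A = 0 ∨ m A = 1)
    {f : Lp ℝ 1 m} (hf : ∫ x, f x ∂m = 0) :
    Tendsto (fun n => ‖coc P σ n ω f‖) atTop (𝓝 0) := by
  have hTm : ∀ ω, Measurable (T ω) := fun ω => (hT ω).measurable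
  have : ∀ n, Fact (comapMapCoc T σ n ω ≤ ‹MeasurableSpace X›) :=
    fun n => ⟨comapMapCoc_le hTm n ω⟩
  have htriv' : ∀ A, MeasurableSet[⨅ n, comapMapCoc T σ (n + 1) ω] A → m A = 0 ∨ m Aᶜ = 0 :=
    fun A hA => by
      have hA' := MeasurableSpace.measurableSet_iInf.1 hA
      exact (htriv A hA').imp_right (prob_compl_eq_zero_iff (comapMapCoc_le hTm 1 ω _ (hA' 0))).2
  rw [← tendsto_add_atTop_iff_nat 1, Metric.tendsto_atTop]
  intro ε hε
  obtain ⟨φ, hφ2, hφ0, hfφ⟩ := exists_memLp_two_integral_eq_zero_norm_sub_lt f hf (half_pos hε)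
  have hproj := tendsto_starProjection_lpMeas_of_iInf_trivial
    (fun i j hij => antitone_comapMapCoc hTm ω (Nat.succ_le_succ hij)) htriv'
    (φ := hφ2.toLp _) (by rwa [integral_congr_ae hφ2.coeFn_toLp])
  obtain ⟨N, hN⟩ := Metric.tendsto_atTop.1 hproj (ε / 2) (half_pos hε)
  refine ⟨N, fun n hn => ?_⟩
  rw [dist_zero_right, norm_norm]
  calc ‖coc P σ (n + 1) ω f‖ ≤ ‖coc P σ (n + 1) ω (f - φ)‖ + ‖coc P σ (n + 1) ω φ‖ := by
        simpa using norm_add_le (coc P σ (n + 1) ω (f - φ)) (coc P σ (n + 1) ω φ)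
    _ ≤ ‖f - φ‖ + ‖(lpMeas ℝ ℝ (comapMapCoc T σ (n + 1) ω) 2 m).starProjection
          (hφ2.toLp _)‖ :=
        add_le_add (hPF.norm_coc_le hT _ ω _)
          (hPF.norm_coc_le_norm_starProjection hT _ ω hφ2.coeFn_toLp.symm)
    _ < ε / 2 + ε / 2 := add_lt_add hfφ (by simpa using hN n hn)
    _ = ε := add_halves ε

theorem tail_trivial_of_tendsto_coc (hPF : IsPerronFrobenius P T)
    (hT : ∀ ω, Measure.QuasiMeasurePreserving (T ω) m m) (ω : Ω)
    (hexact : ∀ f : Lp ℝ 1 m, ∫ x, f x ∂m = 0 → Tendsto (fun n => ‖coc P σ n ω f‖) atTop (𝓝 0))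
    {A : Set X} (hA : ∀ n, MeasurableSet[comapMapCoc T σ (n + 1) ω] A) :
    m A = 0 ∨ m A = 1 := by
  have hAm : MeasurableSet A := comapMapCoc_le (fun ω => (hT ω).measurable) 1 ω _ (hA 0)
  set a := m.real A
  set f : Lp ℝ 1 m := indicatorConstLp 1 hAm (measure_ne_top m A) 1 - Lp.const 1 m a
  have hf : ∀ᵐ x ∂m, f x = A.indicator (fun _ => 1) x - a := by
    filter_upwards [Lp.coeFn_sub (indicatorConstLp 1 hAm (measure_ne_top m A) (1 : ℝ))
      (Lp.const 1 m a), indicatorConstLp_coeFn (p := 1) (hs := hAm) (hμs := measure_ne_top m A)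
      (c := (1 : ℝ)), Lp.coeFn_const 1 m a] with x h1 h2 h3
    rw [h1, Pi.sub_apply, h2, h3]
    rfl
  have hf0 : ∫ x, f x ∂m = 0 := by
    rw [integral_congr_ae hf, integral_sub ((integrable_const 1).indicator hAm)
      (integrable_const a), integral_indicator_const _ hAm]
    simp [a]
  have hind : ∀ {B : Set X} x, ‖B.indicator (1 : X → ℝ) x‖ ≤ 1 := fun {B} x => by
    by_cases hx : x ∈ B <;> simp [hx]
  have hlow : ∀ n, a * (1 - a) ≤ ‖coc P σ (n + 1) ω f‖ := by
    intro n
    obtain ⟨B, hB, hBA⟩ := hA n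
    calc a * (1 - a) = ∫ x, f x * B.indicator 1 (mapCoc T σ (n + 1) ω x) ∂m := by
          rw [integral_congr_ae (g := fun x => A.indicator (fun _ => 1 - a) x)]
          · rw [integral_indicator_const _ hAm, smul_eq_mul, mul_comm]
          · filter_upwards [hf] with x hx
            rw [hx, ← Set.indicator_comp_right, hBA]
            by_cases hxA : x ∈ A <;> simp [hxA]
      _ = ∫ x, (coc P σ (n + 1) ω f) x * B.indicator 1 x ∂m :=
          (hPF.integral_coc_mul hT _ ω f (measurable_one.indicator hB) hind).symm
      _ ≤ ‖coc P σ (n + 1) ω f‖ :=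
          (le_abs_self _).trans (L1.abs_integral_mul_le_norm _ hind)
  have ha : a * (1 - a) = 0 := le_antisymm
    (ge_of_tendsto' ((hexact f hf0).comp (tendsto_add_atTop_nat 1)) hlow)
    (mul_nonneg measureReal_nonneg (sub_nonneg.2 measureReal_le_one))
  rcases mul_eq_zero.1 ha with h | h
  · exact .inl ((measureReal_eq_zero_iff).1 h)
  · exact .inr ((ENNReal.toReal_eq_one_iff _).1 (by rw [← measureReal_def]; linarith))

end IsPerronFrobenius

theorem exact_iff_trivial_tail_field_general
    {X : Type*} [MeasurableSpace X] (m : Measure X) [IsProbabilityMeasure m]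
    {Ω : Type*} [MeasurableSpace Ω] (Pr : Measure Ω)
    (σ : Ω → Ω)
    (T : Ω → X → X) (hTmeas : ∀ ω, Measurable (T ω))
    (hns : ∀ ω, Measure.map (T ω) m ≪ m)
    (P : Ω → Module.End ℝ (Lp ℝ 1 m))
    (hPF : ∀ (ω : Ω) (f : Lp ℝ 1 m) (g : Lp ℝ ⊤ m),
      ∫ x, (P ω f) x * g x ∂m = ∫ x, f x * g (T ω x) ∂m) :
    (∀ᵐ ω ∂Pr, ∀ f : Lp ℝ 1 m, ∫ x, f x ∂m = 0 →
        Tendsto (fun n => ‖coc P σ n ω f‖) atTop (𝓝 0)) ↔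
      (∀ᵐ ω ∂Pr, ∀ A : Set X,
        (∀ n : ℕ, ∃ B : Set X, MeasurableSet B ∧ mapCoc T σ (n + 1) ω ⁻¹' B = A) →
        m A = 0 ∨ m A = 1) := by
  have hT : ∀ ω, Measure.QuasiMeasurePreserving (T ω) m m := fun ω => ⟨hTmeas ω, hns ω⟩
  have hP : IsPerronFrobenius P T := hPF
  exact ⟨fun h => h.mono fun ω hω A hA => hP.tail_trivial_of_tendsto_coc hT ω hω hA,
    fun h => h.mono fun ω hω f hf => hP.tendsto_coc_of_tail_trivial hT ω hω hf⟩

/-- Let `(P,σ)` be a Markov operator cocycle induced by Perron–Frobenius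
operators of non-singular maps `T_ω` (so `∫ P_ω f · g dm = ∫ f · g∘T_ω dm`).
Then `(P,σ)` is exact iff for a.e. `ω` the tail σ-field
`⋂_{n≥1} (T_ω^n)⁻¹𝒜` is trivial mod `m`. -/
theorem exact_iff_trivial_tail_field
    {X : Type*} [MeasurableSpace X] (m : Measure X) [IsProbabilityMeasure m]
    {Ω : Type*} [MeasurableSpace Ω] (Pr : Measure Ω) [IsProbabilityMeasure Pr]
    (σ : Ω → Ω) (hσ : MeasurePreserving σ Pr Pr)
    (T : Ω → X → X) (hTmeas : ∀ ω, Measurable (T ω))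
    (hns : ∀ ω, Measure.map (T ω) m ≪ m)
    (P : Ω → Module.End ℝ (Lp ℝ 1 m))
    (hP : ∀ ω, (∀ f : Lp ℝ 1 m, 0 ≤ f → 0 ≤ P ω f) ∧
      ∀ f : Lp ℝ 1 m, ∫ x, (P ω f) x ∂m = ∫ x, f x ∂m)
    (hPF : ∀ (ω : Ω) (f : Lp ℝ 1 m) (g : Lp ℝ ⊤ m),
      ∫ x, (P ω f) x * g x ∂m = ∫ x, f x * g (T ω x) ∂m) :
    (∀ᵐ ω ∂Pr, ∀ f : Lp ℝ 1 m, ∫ x, f x ∂m = 0 →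
        Tendsto (fun n => ‖coc P σ n ω f‖) atTop (𝓝 0)) ↔
      (∀ᵐ ω ∂Pr, ∀ A : Set X,
        (∀ n : ℕ, ∃ B : Set X, MeasurableSet B ∧ mapCoc T σ (n + 1) ω ⁻¹' B = A) →
        m A = 0 ∨ m A = 1) :=
  exact_iff_trivial_tail_field_general m Pr σ T hTmeas hns P hPF
end

section
/- If a Markov operator cocycle (P,σ) is asymptotically stable (asymptotically periodic with r = 1), then (P,σ) is exact: for ℙ-a.e. ω and every f ∈ L^1_0(X,m), ‖P_ω^{(n)} f‖_{L^1} → 0 as n → ∞. Key step: for f ∈ D(X,m), necessarily λ^ω(f) = 1, since each P_ω preserves integrals and g^ω ∈ D(X,m). -/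
/-!
Every `P_ω` preserves `∫ · dm`, hence so does the cocycle, and `∫ (f - λ^ω(f) g^ω) dm = -λ^ω(f)`
for mean-zero `f`. Since the integral is continuous on `L¹` and the cocycle drives
`f - λ^ω(f) g^ω` to zero, `λ^ω(f) = 0`, so `P_ω^{(n)} f` itself tends to zero.
-/

open MeasureTheory Filter Topology

theorem MeasureTheory.MeasurePreserving.ae_forall_iterate {Ω : Type*} [MeasurableSpace Ω]
    {μ : Measure Ω} {σ : Ω → Ω} (hσ : MeasurePreserving σ μ μ) {p : Ω → Prop}
    (hp : ∀ᵐ ω ∂μ, p ω) : ∀ᵐ ω ∂μ, ∀ k : ℕ, p (σ^[k] ω) :=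
  ae_all_iff.2 fun k => (hσ.iterate k).quasiMeasurePreserving.ae hp

section L1

variable {X E : Type*} [MeasurableSpace X] {m : Measure X}
  [NormedAddCommGroup E] [NormedSpace ℝ E]

theorem integral_coc_apply {Ω : Type*} {P : Ω → Module.End ℝ (Lp E 1 m)} {σ : Ω → Ω} {ω : Ω}
    (hP : ∀ k : ℕ, ∀ f : Lp E 1 m, ∫ x, P (σ^[k] ω) f x ∂m = ∫ x, f x ∂m)
    (n : ℕ) (f : Lp E 1 m) : ∫ x, coc P σ n ω f x ∂m = ∫ x, f x ∂m := by
  induction n with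
  | zero => rfl
  | succ n ih => exact (hP n _).trans ih

theorem integral_coeFn_sub_smul [CompleteSpace E] {f g : Lp E 1 m} (c : ℝ) :
    ∫ x, (f - c • g) x ∂m = ∫ x, f x ∂m - c • ∫ x, g x ∂m := by
  simp only [← L1.integral_eq_integral, L1.integral_sub, L1.integral_smul]

theorem eq_zero_of_integral_eq_of_tendsto_norm [CompleteSpace E] {u : ℕ → Lp E 1 m} {c : E}
    (hc : ∀ n, ∫ x, u n x ∂m = c) (hu : Tendsto (fun n => ‖u n‖) atTop (𝓝 0)) : c = 0 := by
  have hint := (continuous_integral.tendsto 0).comp (tendsto_zero_iff_norm_tendsto_zero.2 hu)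
  rw [← L1.integral_eq_integral, L1.integral_zero] at hint
  simpa only [Function.comp_def, hc, tendsto_const_nhds_iff] using hint

end L1

theorem asymptotically_stable_implies_exact_general
    {X : Type*} [MeasurableSpace X] (m : Measure X)
    {Ω : Type*} [MeasurableSpace Ω] (Pr : Measure Ω)
    (σ : Ω → Ω) (hσ : MeasurePreserving σ Pr Pr)
    (P : Ω → Module.End ℝ (Lp ℝ 1 m))
    (hP : ∀ᵐ ω ∂Pr, (∀ f : Lp ℝ 1 m, 0 ≤ f → 0 ≤ P ω f) ∧
      ∀ f : Lp ℝ 1 m, ∫ x, (P ω f) x ∂m = ∫ x, f x ∂m)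
    (g : Ω → Lp ℝ 1 m) (lam : Ω → (Lp ℝ 1 m →L[ℝ] ℝ))
    (hdens : ∀ᵐ ω ∂Pr, 0 ≤ g ω ∧ ∫ x, (g ω) x ∂m = 1)
    (hconv : ∀ᵐ ω ∂Pr, ∀ f : Lp ℝ 1 m,
      Tendsto (fun n => ‖coc P σ n ω (f - lam ω f • g ω)‖) atTop (𝓝 0)) :
    ∀ᵐ ω ∂Pr, ∀ f : Lp ℝ 1 m, ∫ x, f x ∂m = 0 →
      Tendsto (fun n => ‖coc P σ n ω f‖) atTop (𝓝 0) := by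
  filter_upwards [hσ.ae_forall_iterate (hP.mono fun _ h => h.2), hdens, hconv]
    with ω hPω hgω hconvω f hf
  have hlam : lam ω f = 0 := by
    have hint : ∀ n, ∫ x, coc P σ n ω (f - lam ω f • g ω) x ∂m = -lam ω f := fun n => by
      rw [integral_coc_apply hPω, integral_coeFn_sub_smul, hf, hgω.2, smul_eq_mul, mul_one,
        zero_sub]
    exact neg_eq_zero.1 (eq_zero_of_integral_eq_of_tendsto_norm hint (hconvω f))
  simpa only [hlam, zero_smul, sub_zero] using hconvω f

/-- If a Markov operator cocycle `(P,σ)` is asymptotically stable (asymptotically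
periodic with `r = 1`), then `(P,σ)` is exact: for a.e. `ω` and every mean-zero
`f ∈ L¹(X,m)`, `‖P_ω^{(n)} f‖₁ → 0`. -/
theorem asymptotically_stable_implies_exact
    {X : Type*} [MeasurableSpace X] (m : Measure X) [IsProbabilityMeasure m]
    {Ω : Type*} [MeasurableSpace Ω] (Pr : Measure Ω) [IsProbabilityMeasure Pr]
    (σ : Ω → Ω) (hσ : MeasurePreserving σ Pr Pr)
    (P : Ω → Module.End ℝ (Lp ℝ 1 m))
    (hP : ∀ᵐ ω ∂Pr, (∀ f : Lp ℝ 1 m, 0 ≤ f → 0 ≤ P ω f) ∧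
      ∀ f : Lp ℝ 1 m, ∫ x, (P ω f) x ∂m = ∫ x, f x ∂m)
    (g : Ω → Lp ℝ 1 m) (lam : Ω → (Lp ℝ 1 m →L[ℝ] ℝ))
    (hdens : ∀ᵐ ω ∂Pr, 0 ≤ g ω ∧ ∫ x, (g ω) x ∂m = 1)
    (hinv : ∀ᵐ ω ∂Pr, P ω (g ω) = g (σ ω))
    (hconv : ∀ᵐ ω ∂Pr, ∀ f : Lp ℝ 1 m,
      Tendsto (fun n => ‖coc P σ n ω (f - lam ω f • g ω)‖) atTop (𝓝 0)) :
    ∀ᵐ ω ∂Pr, ∀ f : Lp ℝ 1 m, ∫ x, f x ∂m = 0 →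
      Tendsto (fun n => ‖coc P σ n ω f‖) atTop (𝓝 0) :=
  asymptotically_stable_implies_exact_general m Pr σ hσ P hP g lam hdens hconv
end

section
/- Let (P,σ) be an asymptotically periodic Markov operator cocycle on a metric space (Ω, d_Ω) with σ preserving a regular probability measure ℙ, and suppose each density component g_i ∈ C(Ω, L^∞(X,m)) is continuous in ω. If (P,σ) is prior mixing for homogeneous observables, then the period r equals 1, i.e., (P,σ) is asymptotically stable. -/
/-!
If `r > 1`, take `f = g₀(ω) - g₁(ω)`, which has integral zero. The cocycle permutes the density
components, so `P_ω^{(n)} f = g_a(σⁿω) - g_b(σⁿω)` with `a ≠ b`. At return times of `ω` close to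
itself, continuity makes `g_a(σⁿω)` and `g_b(σⁿω)` close in `L¹` to `g_a(ω)` and `g_b(ω)`, so
testing against the indicator of `supp g_a(ω)` gives more than `1/2` for infinitely many `n`,
contradicting prior mixing. Poincaré recurrence to small neighbourhoods needs a separable set of
full measure, which regularity of `ℙ` provides.
-/

open MeasureTheory Filter Topology

open Function

namespace MeasureTheory

theorem Conservative.ae_mem_imp_frequently_mem_of_mem_nhds {α : Type*} [PseudoMetricSpace α]
    [MeasurableSpace α] [OpensMeasurableSpace α] {f : α → α} {μ : Measure α}
    (hf : Conservative f μ) {s : Set α} (hs : TopologicalSpace.IsSeparable s) :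
    ∀ᵐ x ∂μ, x ∈ s → ∀ U ∈ 𝓝 x, ∃ᶠ n in atTop, f^[n] x ∈ U := by
  obtain ⟨c, hc, hsc⟩ := hs
  have hball : ∀ᵐ x ∂μ, ∀ k : ℕ, ∀ y ∈ c, x ∈ Metric.ball y (1 / (k + 1)) →
      ∃ᶠ n in atTop, f^[n] x ∈ Metric.ball y (1 / (k + 1)) := by
    refine ae_all_iff.2 fun k => (ae_ball_iff hc).2 fun y _ => ?_
    exact hf.ae_mem_imp_frequently_image_mem measurableSet_ball.nullMeasurableSet
  filter_upwards [hball] with x hx hxs U hU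
  obtain ⟨ε, hε, hεU⟩ := Metric.mem_nhds_iff.1 hU
  obtain ⟨k, hk⟩ := exists_nat_one_div_lt (half_pos hε)
  obtain ⟨y, hyc, hxy⟩ := Metric.mem_closure_iff.1 (hsc hxs) (1 / (k + 1)) Nat.one_div_pos_of_nat
  refine (hx k y hyc hxy).mono fun n hn => hεU ?_
  calc dist (f^[n] x) x ≤ dist (f^[n] x) y + dist x y := dist_triangle_right _ _ _
    _ < ε := by rw [Metric.mem_ball] at hn; linarith

section

variable {α : Type*} [MetricSpace α] [MeasurableSpace α] [OpensMeasurableSpace α]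

theorem exists_isSeparable_ae_mem (μ : Measure α) [IsFiniteMeasure μ] [μ.InnerRegularCompactLTTop] :
    ∃ s : Set α, TopologicalSpace.IsSeparable s ∧ ∀ᵐ x ∂μ, x ∈ s := by
  have hK : ∀ n : ℕ, ∃ K, K ⊆ Set.univ ∧ IsCompact K ∧ μ (Set.univ \ K) < (n : ENNReal)⁻¹ :=
    fun n => MeasurableSet.univ.exists_isCompact_sdiff_lt (measure_ne_top μ _)
      (ENNReal.inv_ne_zero.2 (ENNReal.natCast_ne_top n))
  choose K _ hKc hKμ using hK
  refine ⟨⋃ n, K n, .iUnion fun n => (hKc n).isSeparable, ?_⟩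
  refine mem_ae_iff.2 <| le_antisymm
    (ENNReal.le_of_forall_pos_le_add fun ε hε _ => ?_) bot_le
  obtain ⟨n, hn⟩ := ENNReal.exists_inv_nat_lt (a := ε) (by simpa using hε.ne')
  calc μ (⋃ n, K n)ᶜ ≤ μ (Set.univ \ K n) :=
        measure_mono fun x hx => ⟨trivial, fun hxK => hx (Set.mem_iUnion_of_mem n hxK)⟩
    _ ≤ 0 + ε := by rw [zero_add]; exact (hKμ n).le.trans hn.le

theorem Conservative.ae_frequently_mem_of_mem_nhds_of_innerRegular {f : α → α} {μ : Measure α}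
    [IsFiniteMeasure μ] [μ.InnerRegularCompactLTTop] (hf : Conservative f μ) :
    ∀ᵐ x ∂μ, ∀ U ∈ 𝓝 x, ∃ᶠ n in atTop, f^[n] x ∈ U := by
  obtain ⟨s, hs, hμs⟩ := exists_isSeparable_ae_mem μ
  filter_upwards [hμs, hf.ae_mem_imp_frequently_mem_of_mem_nhds hs] with x hx h using h hx

end

theorem MeasurePreserving.ae_forall_iterate_s15 {α : Type*} [MeasurableSpace α]
    {f : α → α} {μ : Measure α} (hf : MeasurePreserving f μ μ) {p : α → Prop}
    (h : ∀ᵐ x ∂μ, p x) : ∀ᵐ x ∂μ, ∀ n, p (f^[n] x) :=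
  ae_all_iff.2 fun n => (hf.iterate n).quasiMeasurePreserving.ae h

end MeasureTheory

theorem exists_perm_coc_apply {Ω ι R E : Type*} [Semiring R] [AddCommMonoid E] [Module R E]
    {P : Ω → Module.End R E} {σ : Ω → Ω} {g : ι → Ω → E} {ρ : Ω → Equiv.Perm ι} {ω : Ω}
    (h : ∀ n i, P (σ^[n] ω) (g i (σ^[n] ω)) = g (ρ (σ^[n] ω) i) (σ (σ^[n] ω))) (n : ℕ) :
    ∃ τ : Equiv.Perm ι, ∀ i, coc P σ n ω (g i ω) = g (τ i) (σ^[n] ω) := by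
  induction n with
  | zero => exact ⟨1, fun i => rfl⟩
  | succ n ih =>
    obtain ⟨τ, hτ⟩ := ih
    refine ⟨τ.trans (ρ (σ^[n] ω)), fun i => ?_⟩
    rw [coc, Module.End.mul_apply, hτ, h, Function.iterate_succ_apply']
    rfl

namespace MeasureTheory.L1

variable {X : Type*} [MeasurableSpace X] {m : Measure X}

theorem setIntegral_coeFn_sub (v w : Lp ℝ 1 m) (s : Set X) :
    ∫ x in s, (v - w) x ∂m = ∫ x in s, v x ∂m - ∫ x in s, w x ∂m := by
  rw [integral_congr_ae (ae_restrict_of_ae (Lp.coeFn_sub v w))]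
  exact MeasureTheory.integral_sub (integrable_coeFn v).integrableOn
    (integrable_coeFn w).integrableOn

theorem integral_coeFn_sub (v w : Lp ℝ 1 m) :
    ∫ x, (v - w) x ∂m = ∫ x, v x ∂m - ∫ x, w x ∂m := by
  simpa using setIntegral_coeFn_sub v w Set.univ

theorem abs_setIntegral_le_norm (v : Lp ℝ 1 m) (s : Set X) : |∫ x in s, v x ∂m| ≤ ‖v‖ :=
  calc |∫ x in s, v x ∂m| ≤ ∫ x in s, ‖v x‖ ∂m :=
      (Real.norm_eq_abs _).symm.trans_le (norm_integral_le_integral_norm _)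
    _ ≤ ∫ x, ‖v x‖ ∂m :=
      setIntegral_le_integral (integrable_coeFn v).norm (ae_of_all _ fun _ => norm_nonneg _)
    _ = ‖v‖ := (norm_eq_integral_norm v).symm

theorem measurableSet_support (v : Lp ℝ 1 m) : MeasurableSet (support v) :=
  (Lp.stronglyMeasurable v).measurableSet_support

theorem setIntegral_support (v : Lp ℝ 1 m) : ∫ x in support v, v x ∂m = ∫ x, v x ∂m :=
  setIntegral_eq_integral_of_forall_compl_eq_zero fun _ hx => notMem_support.1 hx

theorem setIntegral_support_eq_zero_of_inf_eq_zero {p q : Lp ℝ 1 m} (hpq : p ⊓ q = 0) :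
    ∫ x in support p, q x ∂m = 0 := by
  have hmin : ∀ᵐ x ∂m, min (p x) (q x) = 0 := by
    have hinf := Lp.coeFn_inf p q
    rw [hpq] at hinf
    filter_upwards [hinf, Lp.coeFn_zero ℝ 1 m] with x h h0
    exact h.symm.trans h0
  refine setIntegral_eq_zero_of_ae_eq_zero ?_
  filter_upwards [hmin] with x hx hxp
  rcases min_eq_iff.1 hx with ⟨h, -⟩ | ⟨h, -⟩
  · exact absurd h hxp
  · exact h

theorem integral_sub_norm_sub_le_setIntegral_support {p q : Lp ℝ 1 m} (hpq : p ⊓ q = 0)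
    (v w : Lp ℝ 1 m) :
    ∫ x, p x ∂m - ‖v - p‖ - ‖w - q‖ ≤ ∫ x in support p, (v - w) x ∂m := by
  have hv := abs_le.1 <| (abs_setIntegral_le_norm (v - p) (support p)).trans_eq'
    (by rw [setIntegral_coeFn_sub, setIntegral_support])
  have hw := abs_le.1 <| (abs_setIntegral_le_norm (w - q) (support p)).trans_eq'
    (by rw [setIntegral_coeFn_sub, setIntegral_support_eq_zero_of_inf_eq_zero hpq])
  rw [setIntegral_coeFn_sub]
  linarith [hv.1, hw.2]

variable [IsFiniteMeasure m]

theorem integral_mul_indicatorConstLp_one {s : Set X} (hs : MeasurableSet s) (f : X → ℝ) :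
    ∫ x, f x * indicatorConstLp ⊤ hs (measure_ne_top m s) (1 : ℝ) x ∂m = ∫ x in s, f x ∂m := by
  rw [← integral_indicator hs]
  refine integral_congr_ae ?_
  filter_upwards [indicatorConstLp_coeFn (p := ⊤) (hs := hs) (hμs := measure_ne_top m s)
    (c := (1 : ℝ))] with x hx
  rw [hx, ← Set.indicator_mul_right]
  simp

end MeasureTheory.L1

theorem prior_mixing_implies_period_one_general
    {X : Type*} [MeasurableSpace X] (m : Measure X) [IsProbabilityMeasure m]
    {Ω : Type*} [MetricSpace Ω] [MeasurableSpace Ω] [BorelSpace Ω]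
    (Pr : Measure Ω) [IsProbabilityMeasure Pr] (hreg : Pr.Regular)
    (σ : Ω → Ω) (hσ : MeasurePreserving σ Pr Pr)
    (P : Ω → Module.End ℝ (Lp ℝ 1 m))
    -- asymptotic periodicity data with continuous density components:
    (r : ℕ) (hr : 0 < r)
    (g : Fin r → Ω → Lp ℝ 1 m)
    (ρ : Ω → Equiv.Perm (Fin r))
    (hgcont : ∀ i, Continuous (g i))
    (hdens : ∀ᵐ ω ∂Pr, ∀ i, 0 ≤ g i ω ∧ ∫ x, (g i ω) x ∂m = 1)
    (hdisj : ∀ᵐ ω ∂Pr, ∀ i j, i ≠ j → g i ω ⊓ g j ω = 0)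
    (hperm : ∀ᵐ ω ∂Pr, ∀ i, P ω (g i ω) = g (ρ ω i) (σ ω))
    -- prior mixing for homogeneous observables:
    (hmix : ∀ᵐ ω ∂Pr, ∀ (f : Lp ℝ 1 m), ∫ x, f x ∂m = 0 → ∀ (u : Lp ℝ ⊤ m),
      Tendsto (fun n => ∫ x, (coc P σ n ω f) x * u x ∂m) atTop (𝓝 0)) :
    r = 1 := by
  by_contra hr1
  let i₀ : Fin r := ⟨0, hr⟩
  let i₁ : Fin r := ⟨1, by omega⟩
  obtain ⟨ω, hωdens, hωdisj, hωperm, hωmix, hωrec⟩ := (hdens.and <| hdisj.and <|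
    (hσ.ae_forall_iterate_s15 hperm).and <| hmix.and <|
    hσ.conservative.ae_frequently_mem_of_mem_nhds_of_innerRegular).exists
  let u (i : Fin r) : Lp ℝ ⊤ m :=
    indicatorConstLp ⊤ (L1.measurableSet_support (g i ω)) (measure_ne_top m _) 1
  let f₀ := g i₀ ω - g i₁ ω
  have hf₀ : ∫ x, f₀ x ∂m = 0 := by
    rw [L1.integral_coeFn_sub, (hωdens i₀).2, (hωdens i₁).2, sub_self]
  have hsmall : ∀ᶠ n in atTop, ∀ i, ∫ x, (coc P σ n ω f₀) x * u i x ∂m < 1 / 2 :=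
    eventually_all.2 fun i => (hωmix f₀ hf₀ (u i)).eventually_lt_const (by norm_num)
  have hnear : ∀ᶠ ω' in 𝓝 ω, ∀ i, ‖g i ω' - g i ω‖ < 1 / 4 :=
    eventually_all.2 fun i => by
      simpa only [dist_eq_norm] using (hgcont i).continuousAt.eventually
        (Metric.ball_mem_nhds _ (by norm_num : (0 : ℝ) < 1 / 4))
  obtain ⟨n, hn_near, hn_small⟩ := ((hωrec _ hnear).and_eventually hsmall).exists
  obtain ⟨τ, hτ⟩ := exists_perm_coc_apply hωperm n
  have hτ₀₁ : τ i₀ ≠ τ i₁ := τ.injective.ne (by simp [i₀, i₁, Fin.ext_iff])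
  have hsep := L1.integral_sub_norm_sub_le_setIntegral_support (hωdisj _ _ hτ₀₁)
    (g (τ i₀) (σ^[n] ω)) (g (τ i₁) (σ^[n] ω))
  have hn := hn_small (τ i₀)
  rw [map_sub, hτ, hτ, L1.integral_mul_indicatorConstLp_one] at hn
  linarith [hn_near (τ i₀), hn_near (τ i₁), (hωdens (τ i₀)).2]

/-- Let `(P,σ)` be an asymptotically periodic Markov operator cocycle on a metric
space `Ω` with `σ` preserving a regular probability measure, such that each
density component `g_i` depends continuously on `ω`. If `(P,σ)` is prior mixing
for homogeneous observables, then the period `r` equals `1`. -/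
theorem prior_mixing_implies_period_one
    {X : Type*} [MeasurableSpace X] (m : Measure X) [IsProbabilityMeasure m]
    {Ω : Type*} [MetricSpace Ω] [MeasurableSpace Ω] [BorelSpace Ω]
    (Pr : Measure Ω) [IsProbabilityMeasure Pr] (hreg : Pr.Regular)
    (σ : Ω → Ω) (hσ : MeasurePreserving σ Pr Pr)
    (P : Ω → Module.End ℝ (Lp ℝ 1 m))
    (hP : ∀ᵐ ω ∂Pr, (∀ f : Lp ℝ 1 m, 0 ≤ f → 0 ≤ P ω f) ∧
      ∀ f : Lp ℝ 1 m, ∫ x, (P ω f) x ∂m = ∫ x, f x ∂m)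
    -- asymptotic periodicity data with continuous density components:
    (r : ℕ) (hr : 0 < r)
    (g : Fin r → Ω → Lp ℝ 1 m) (lam : Fin r → Ω → (Lp ℝ 1 m →L[ℝ] ℝ))
    (ρ : Ω → Equiv.Perm (Fin r))
    (hgcont : ∀ i, Continuous (g i))
    (hdens : ∀ᵐ ω ∂Pr, ∀ i, 0 ≤ g i ω ∧ ∫ x, (g i ω) x ∂m = 1)
    (hdisj : ∀ᵐ ω ∂Pr, ∀ i j, i ≠ j → g i ω ⊓ g j ω = 0)
    (hperm : ∀ᵐ ω ∂Pr, ∀ i, P ω (g i ω) = g (ρ ω i) (σ ω))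
    (hconv : ∀ᵐ ω ∂Pr, ∀ f : Lp ℝ 1 m,
      Tendsto (fun n => ‖coc P σ n ω (f - ∑ i, lam i ω f • g i ω)‖)
        atTop (𝓝 0))
    -- prior mixing for homogeneous observables:
    (hmix : ∀ᵐ ω ∂Pr, ∀ (f : Lp ℝ 1 m), ∫ x, f x ∂m = 0 → ∀ (u : Lp ℝ ⊤ m),
      Tendsto (fun n => ∫ x, (coc P σ n ω f) x * u x ∂m) atTop (𝓝 0)) :
    r = 1 :=
  prior_mixing_implies_period_one_general m Pr hreg σ hσ P r hr g ρ hgcont hdens hdisj hperm hmix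
end
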